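/- Saito's criterion in two variables: if θ_1, θ_2 ∈ Der(-log f) for a reduced f ∈ C[x,y] and the determinant of their coefficient matrix equals c·f for a nonzero constant c, then θ_1, θ_2 form a free basis of Der(-log f). -/

import Mathlib

/-!
By Cramer's rule every `η` in a submodule containing `θ₁, θ₂` satisfies
`det(θ₁, θ₂) • η = det(η, θ₂) • θ₁ + det(θ₁, η) • θ₂`, so `θ₁, θ₂` form a basis once `f`, the
determinant up to a unit, divides both minors on the right. Take `η, θ` logarithmic along `f`.
Multiplying `det(η, θ)` by `∂₀f` or by `∂₁f` gives a combination of `η · ∇f` and `θ · ∇f`, so `f`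
divides `det(η, θ) · ∂ᵢf` for both `i`. A prime factor `p` of the reduced `f` cannot divide both
partials of `f`: it would then divide its own partials, which lowers the degree, so those
partials vanish and `p` is constant. Hence every prime factor of `f` divides `det(η, θ)`, and so
does `f`, being squarefree.
-/

open MvPolynomial

set_option maxHeartbeats 1000000
set_option synthInstance.maxHeartbeats 400000

noncomputable section

abbrev P (n : ℕ) : Type := MvPolynomial (Fin n) ℂ

/-- The module `Der(-log f)` of logarithmic derivations along `f`, recorded as
coefficient tuples `c` with `Σ cᵢ ∂ᵢ f ∈ (f)`. -/
def DerLog (n : ℕ) (f : P n) : Submodule (P n) (Fin n → P n) where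
  carrier := {c | (∑ i, c i * pderiv i f) ∈ Ideal.span {f}}
  zero_mem' := by simp
  add_mem' := by
    intro c d hc hd
    have h : (∑ i, (c + d) i * pderiv i f) =
        (∑ i, c i * pderiv i f) + (∑ i, d i * pderiv i f) := by
      simp [add_mul, Finset.sum_add_distrib]
    simp only [Set.mem_setOf_eq] at hc hd ⊢
    rw [h]; exact add_mem hc hd
  smul_mem' := by
    intro a c hc
    have h : (∑ i, (a • c) i * pderiv i f) = a * ∑ i, c i * pderiv i f := by
      simp [Finset.mul_sum, mul_assoc]
    simp only [Set.mem_setOf_eq] at hc ⊢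
    rw [h]; exact Ideal.mul_mem_left _ a hc

theorem Squarefree.dvd_of_forall_prime_dvd {α : Type*} [CommMonoidWithZero α]
    [UniqueFactorizationMonoid α] {f d : α} (hf : Squarefree f)
    (h : ∀ p, Prime p → p ∣ f → p ∣ d) : f ∣ d := by
  nontriviality α
  induction f using UniqueFactorizationMonoid.induction_on_prime with
  | h₁ => exact absurd hf not_squarefree_zero
  | h₂ x hx => exact hx.dvd
  | h₃ a p _ hp ih =>
    have hpa : ¬p ∣ a := fun hd ↦ hp.not_isUnit (hf p (mul_dvd_mul_left p hd))
    obtain ⟨e, rfl⟩ := ih (hf.squarefree_of_dvd (dvd_mul_left a p))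
      fun q hq hqa ↦ h q hq (hqa.trans (dvd_mul_left a p))
    obtain ⟨e', rfl⟩ := (hp.dvd_or_dvd (h p hp (dvd_mul_right p a))).resolve_left hpa
    exact ⟨e', by ac_rfl⟩

namespace MvPolynomial

variable {R σ : Type*}

section CommSemiring

variable [CommSemiring R] {p : MvPolynomial σ R} {i : σ}

theorem degreeOf_pderiv_lt (h : pderiv i p ≠ 0) : degreeOf i (pderiv i p) < degreeOf i p := by
  classical
  have key : ∀ m ∈ (pderiv i p).support, m i < degreeOf i p := fun m hm ↦ by
    rw [mem_support_iff, coeff_pderiv] at hm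
    simpa using monomial_le_degreeOf i (mem_support_iff.2 (left_ne_zero_of_mul hm))
  obtain ⟨m, hm⟩ := support_nonempty.2 h
  exact (degreeOf_lt_iff ((Nat.zero_le _).trans_lt (key m hm))).2 key

theorem pderiv_eq_zero_of_dvd_pderiv [NoZeroDivisors R] (h : p ∣ pderiv i p) :
    pderiv i p = 0 := by
  by_contra hne
  obtain ⟨q, hq⟩ := h
  have hp : p ≠ 0 := left_ne_zero_of_mul (hq ▸ hne)
  have hq0 : q ≠ 0 := right_ne_zero_of_mul (hq ▸ hne)
  have hlt := degreeOf_pderiv_lt hne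
  rw [hq, degreeOf_mul_eq hp hq0] at hlt
  omega

end CommSemiring

theorem eq_C_of_forall_pderiv_eq_zero [CommRing R] [NoZeroDivisors R] [CharZero R]
    {p : MvPolynomial σ R} (h : ∀ i, pderiv i p = 0) : p = C (coeff 0 p) := by
  classical
  ext m
  rw [coeff_C]
  split_ifs with hm
  · rw [hm]
  obtain ⟨i, hi⟩ : ∃ i, m i ≠ 0 := by
    by_contra! h0
    exact hm (Finsupp.ext h0).symm
  have hle : Finsupp.single i 1 ≤ m := Finsupp.single_le_iff.2 (Nat.one_le_iff_ne_zero.2 hi)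
  have hcoeff := congr_arg (coeff (m - Finsupp.single i 1)) (h i)
  rw [coeff_pderiv, tsub_add_cancel_of_le hle, coeff_zero] at hcoeff
  exact (mul_eq_zero.1 hcoeff).resolve_right (by norm_cast)

end MvPolynomial

section Field

variable {K σ : Type*} [Field K] [CharZero K]

theorem Prime.exists_not_dvd_pderiv_self {p : MvPolynomial σ K} (hp : Prime p) :
    ∃ i, ¬p ∣ pderiv i p := by
  by_contra! h
  rw [eq_C_of_forall_pderiv_eq_zero fun i ↦ pderiv_eq_zero_of_dvd_pderiv (h i)] at hp
  exact hp.not_isUnit ((isUnit_iff_ne_zero.2 (by rintro h0; simp [h0] at hp)).map C)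

theorem Squarefree.exists_not_dvd_pderiv {f p : MvPolynomial σ K} (hf : Squarefree f)
    (hp : Prime p) (hpf : p ∣ f) : ∃ i, ¬p ∣ pderiv i f := by
  obtain ⟨i, hi⟩ := hp.exists_not_dvd_pderiv_self
  obtain ⟨u, rfl⟩ := hpf
  have hpu : ¬p ∣ u := fun hd ↦ hp.not_isUnit (hf p (mul_dvd_mul_left p hd))
  refine ⟨i, fun hd ↦ ?_⟩
  rw [pderiv_mul, dvd_add_left (dvd_mul_right _ _)] at hd
  exact (hp.dvd_or_dvd hd).elim hi hpu

theorem Squarefree.dvd_det_of_dvd_sum_mul_pderiv {f : MvPolynomial (Fin 2) K}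
    (hf : Squarefree f) {a b : Fin 2 → MvPolynomial (Fin 2) K}
    (ha : f ∣ ∑ i, a i * pderiv i f) (hb : f ∣ ∑ i, b i * pderiv i f) :
    f ∣ a 0 * b 1 - a 1 * b 0 := by
  rw [Fin.sum_univ_two] at ha hb
  have hD : ∀ i, f ∣ (a 0 * b 1 - a 1 * b 0) * pderiv i f := by
    refine Fin.forall_fin_two.2 ⟨?_, ?_⟩
    · convert dvd_sub (ha.mul_left (b 1)) (hb.mul_left (a 1)) using 1; ring
    · convert dvd_sub (hb.mul_left (a 0)) (ha.mul_left (b 0)) using 1; ring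
  refine hf.dvd_of_forall_prime_dvd fun p hp hpf ↦ ?_
  obtain ⟨i, hi⟩ := hf.exists_not_dvd_pderiv hp hpf
  exact (hp.dvd_or_dvd (hpf.trans (hD i))).resolve_right hi

end Field

open Matrix in
theorem Submodule.exists_basis_of_det_dvd_det_updateRow {R ι : Type*} [CommRing R] [IsDomain R]
    [Fintype ι] [DecidableEq ι] {N : Submodule R (ι → R)} (θ : ι → ι → R) (hθ : ∀ i, θ i ∈ N)
    (hdet : (of θ).det ≠ 0)
    (hdvd : ∀ η ∈ N, ∀ i, (of θ).det ∣ ((of θ).updateRow i η).det) :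
    ∃ b : Module.Basis ι R N, ∀ i, (b i : ι → R) = θ i := by
  set A := of θ
  let v : ι → N := fun i ↦ ⟨θ i, hθ i⟩
  have hli : LinearIndependent R v :=
    LinearIndependent.of_comp N.subtype (linearIndependent_rows_of_det_ne_zero hdet)
  have hsp : ⊤ ≤ Submodule.span R (Set.range v) := by
    rintro η -
    choose x hx using hdvd η η.2
    -- Cramer's rule: the coefficients of `η` are the updated minors divided by `det A`.
    have hcomb : x ᵥ* A = η := by
      apply smul_right_injective (ι → R) hdet
      have hcr : Aᵀ.cramer η = A.det • x := funext fun i ↦ by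
        simp [cramer_transpose_apply, hx]
      simpa [← mulVec_transpose, hcr, mulVec_smul] using mulVec_cramer Aᵀ (η : ι → R)
    have hη : η = ∑ i, x i • v i := Subtype.ext <| by
      simp only [Submodule.coe_sum, Submodule.coe_smul, v]
      rw [← hcomb, vecMul_eq_sum]
      rfl
    rw [hη]
    exact Submodule.sum_mem _ fun i _ ↦ Submodule.smul_mem _ _ (Submodule.subset_span ⟨i, rfl⟩)
  exact ⟨.mk hli hsp, fun i ↦ by simp [v]⟩

theorem mem_derLog_iff {n : ℕ} {f : P n} {θ : Fin n → P n} :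
    θ ∈ DerLog n f ↔ f ∣ ∑ i, θ i * pderiv i f :=
  Ideal.mem_span_singleton

/-- **Saito's criterion in two variables.** If `θ₁, θ₂` are
logarithmic along a reduced `f` and the determinant of their coefficient matrix
is a nonzero constant multiple of `f`, then they form a free basis of
`Der(-log f)`. -/
theorem saito_criterion_two_vars (f : P 2) (hred : Squarefree f)
    (θ₁ θ₂ : Fin 2 → P 2)
    (h₁ : θ₁ ∈ DerLog 2 f) (h₂ : θ₂ ∈ DerLog 2 f)
    (c : ℂ) (hc : c ≠ 0)
    (hdet : θ₁ 0 * θ₂ 1 - θ₁ 1 * θ₂ 0 = c • f) :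
    ∃ b : Module.Basis (Fin 2) (P 2) (DerLog 2 f),
      ((b 0 : Fin 2 → P 2) = θ₁) ∧ ((b 1 : Fin 2 → P 2) = θ₂) := by
  have hA : (Matrix.of ![θ₁, θ₂]).det = C c * f := by
    rw [Matrix.det_fin_two, ← smul_eq_C_mul, ← hdet]
    rfl
  have hunit : IsUnit (C c : P 2) := (isUnit_iff_ne_zero.2 hc).map C
  obtain ⟨b, hb⟩ := Submodule.exists_basis_of_det_dvd_det_updateRow ![θ₁, θ₂]
    (Fin.forall_fin_two.2 ⟨h₁, h₂⟩) (hA ▸ mul_ne_zero hunit.ne_zero hred.ne_zero) <| by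
      intro η hη
      rw [hA, Fin.forall_fin_two, hunit.mul_left_dvd, hunit.mul_left_dvd,
        Matrix.det_fin_two, Matrix.det_fin_two]
      rw [mem_derLog_iff] at h₁ h₂ hη
      exact ⟨hred.dvd_det_of_dvd_sum_mul_pderiv hη h₂, hred.dvd_det_of_dvd_sum_mul_pderiv h₁ hη⟩
  exact ⟨b, hb 0, hb 1⟩
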